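/- arXiv:1210.6019 — 7 statements merged into one kernel-verified Lean document; each statement's English description precedes it below -/
import Mathlib

section
/- For all k ≥ 1, the arrival and departure times admit the closed-form solution A(k) = Σ_{i=1}^{k} α_i and D(k) = max_{1 ≤ i ≤ k} ( Σ_{j=1}^{i} α_j + Σ_{j=i}^{k} τ_j ). -/
/-- For the `G/G/1` queue starting empty at time zero, with interarrival
times `α k ≥ 0` and service times `τ k`, the recursions
`A k = A (k-1) + α k` and `D k = max (A k) (D (k-1)) + τ k` (for `k ≥ 1`), with
`A 0 = D 0 = 0`, admit the closed-form solution
`A k = ∑_{i=1}^{k} α i` and `D k = max_{1 ≤ i ≤ k} (∑_{j=1}^{i} α j + ∑_{j=i}^{k} τ j)`. -/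
theorem gg1_closed_form (α τ : ℕ → ℝ) (A D : ℕ → ℝ)
    (hα : ∀ k, 1 ≤ k → 0 ≤ α k)
    (hA0 : A 0 = 0) (hD0 : D 0 = 0)
    (hA : ∀ k, 1 ≤ k → A k = A (k - 1) + α k)
    (hD : ∀ k, 1 ≤ k → D k = max (A k) (D (k - 1)) + τ k) :
    ∀ k, ∀ hk : 1 ≤ k,
      A k = ∑ i ∈ Finset.Icc 1 k, α i ∧
      D k = (Finset.Icc 1 k).sup' (Finset.nonempty_Icc.mpr hk)
        (fun i => (∑ j ∈ Finset.Icc 1 i, α j) + (∑ j ∈ Finset.Icc i k, τ j)) := by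
  intro k hk
  induction k, hk using Nat.le_induction with
  | base =>
    have hA1 : A 1 = α 1 := by simpa [hA0] using hA 1 le_rfl
    have hD1 : D 1 = A 1 + τ 1 := by
      have := hD 1 le_rfl
      rw [hD0] at this
      rw [this, max_eq_left (by rw [hA1]; exact hα 1 le_rfl)]
    simp [hA1, hD1]
  | succ k hk ih =>
    obtain ⟨ihA, ihD⟩ := ih
    have hAk : A (k + 1) = ∑ i ∈ Finset.Icc 1 (k + 1), α i := by
      rw [hA (k + 1) (by omega), Nat.add_sub_cancel, ihA,
        Finset.sum_Icc_succ_top (by omega)]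
    refine ⟨hAk, ?_⟩
    have hins : Finset.Icc 1 (k + 1) = insert (k + 1) (Finset.Icc 1 k) := by
      ext x; simp only [Finset.mem_Icc, Finset.mem_insert]; omega
    have hne : (Finset.Icc 1 k).Nonempty := Finset.nonempty_Icc.mpr hk
    rw [hD (k + 1) (by omega), Nat.add_sub_cancel, ihD]
    have hmax : ∀ a b c : ℝ, max a b + c = max (a + c) (b + c) := by
      intro a b c; rcases le_total a b with h | h
      · rw [max_eq_right h, max_eq_right (by linarith)]
      · rw [max_eq_left h, max_eq_left (by linarith)]
    rw [hmax, Finset.sup'_add]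
    rw [Finset.sup'_congr _ hins (fun _ _ => rfl), Finset.sup'_insert hne,
      Finset.Icc_self, Finset.sum_singleton, hAk]
    congr 1
    apply Finset.sup'_congr _ rfl
    intro i hi
    rw [Finset.sum_Icc_succ_top ((Finset.mem_Icc.mp hi).2.trans (by omega))]; ring
end

section
/- For all k ≥ 1, the departure time from the last server admits the closed-form solution D_n(k) = max over all nondecreasing index tuples 1 ≤ i_1 ≤ i_2 ≤ ... ≤ i_n ≤ k of ( Σ_{j=1}^{i_1} τ_{0,j} + Σ_{j=i_1}^{i_2} τ_{1,j} + Σ_{j=i_2}^{i_3} τ_{2,j} + ... + Σ_{j=i_n}^{k} τ_{n,j} ). -/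
noncomputable def Mcl (τ : ℕ → ℕ → ℝ) : ℕ → ℕ → ℝ
  | 0, k => ∑ j ∈ Finset.Icc 1 k, τ 0 j
  | (i+1), k => (insert 1 (Finset.Icc 1 k)).sup' (Finset.insert_nonempty _ _)
      (fun j => Mcl τ i j + ∑ l ∈ Finset.Icc j k, τ (i+1) l)

lemma Mcl_succ (τ : ℕ → ℕ → ℝ) (i k : ℕ) (hk : 1 ≤ k) :
    Mcl τ (i+1) k = (Finset.Icc 1 k).sup' ⟨1, by simp [hk]⟩
      (fun j => Mcl τ i j + ∑ l ∈ Finset.Icc j k, τ (i+1) l) := by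
  have h : insert 1 (Finset.Icc 1 k) = Finset.Icc 1 k := by
    rw [Finset.insert_eq_self]; simp [hk]
  rw [Mcl]
  exact Finset.sup'_congr _ h (fun _ _ => rfl)

def Sset (τ : ℕ → ℕ → ℝ) (i k : ℕ) : Set ℝ :=
  { x : ℝ | ∃ g : ℕ → ℕ, g 0 = 1 ∧ g (i + 1) = k ∧
      (∀ m, m ≤ i → g m ≤ g (m + 1)) ∧
      x = ∑ m ∈ Finset.range (i + 1), ∑ j ∈ Finset.Icc (g m) (g (m + 1)), τ m j }

lemma Mcl_mem (τ : ℕ → ℕ → ℝ) : ∀ i k, 1 ≤ k → Mcl τ i k ∈ Sset τ i k := by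
  intro i
  induction i with
  | zero =>
    intro k hk
    refine ⟨fun m => if m = 0 then 1 else k, rfl, rfl, fun m hm => ?_, ?_⟩
    · interval_cases m; simpa
    · simp [Mcl]
  | succ i ih =>
    intro k hk
    rw [Mcl_succ τ i k hk]
    obtain ⟨j, hj, hje⟩ := Finset.exists_mem_eq_sup' (s := Finset.Icc 1 k)
      ⟨1, by simp [hk]⟩ (fun j => Mcl τ i j + ∑ l ∈ Finset.Icc j k, τ (i+1) l)
    rw [Finset.mem_Icc] at hj
    obtain ⟨g, hg0, hgi, hgmono, hgsum⟩ := ih j hj.1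
    refine ⟨fun m => if m ≤ i + 1 then g m else k,
      by beta_reduce; rw [if_pos (Nat.zero_le _)]; exact hg0,
      by beta_reduce; rw [if_neg (by omega : ¬ (i + 1 + 1 ≤ i + 1))], ?_, ?_⟩
    · intro m hm
      rcases lt_or_eq_of_le hm with h | h
      · have h1 : m ≤ i + 1 := by omega
        have h2 : m + 1 ≤ i + 1 := by omega
        simp only [h1, h2, if_true]
        exact hgmono m (by omega)
      · subst h
        beta_reduce
        rw [if_pos le_rfl, if_neg (by omega : ¬ (i + 1 + 1 ≤ i + 1)), hgi]
        exact hj.2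
    · rw [hje, Finset.sum_range_succ, hgsum]
      congr 1
      · apply Finset.sum_congr rfl
        intro m hm
        rw [Finset.mem_range] at hm
        have h1 : m ≤ i + 1 := by omega
        have h2 : m + 1 ≤ i + 1 := by omega
        simp [h1, h2]
      · beta_reduce
        rw [if_pos le_rfl, if_neg (by omega : ¬ (i + 1 + 1 ≤ i + 1)), hgi]

lemma Mcl_ub (τ : ℕ → ℕ → ℝ) : ∀ i k x, x ∈ Sset τ i k → x ≤ Mcl τ i k := by
  intro i
  induction i with
  | zero =>
    rintro k x ⟨g, hg0, hg1, _, rfl⟩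
    rw [Finset.sum_range_one, hg0, hg1, Mcl]
  | succ i ih =>
    rintro k x ⟨g, hg0, hg1, hgmono, rfl⟩
    have hge1 : ∀ m, m ≤ i + 1 → 1 ≤ g m := by
      intro m hm
      induction m with
      | zero => simp [hg0]
      | succ m ihm =>
        have := hgmono m (by omega)
        have := ihm (by omega)
        omega
    set j := g (i + 1) with hj
    have hj1 : 1 ≤ j := hge1 (i+1) le_rfl
    have hjk : j ≤ k := by rw [← hg1]; exact hgmono (i+1) le_rfl
    have hk1 : 1 ≤ k := le_trans hj1 hjk
    rw [Mcl_succ τ i k hk1, Finset.sum_range_succ]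
    have hmem : (∑ m ∈ Finset.range (i + 1), ∑ l ∈ Finset.Icc (g m) (g (m + 1)), τ m l)
        ∈ Sset τ i j := ⟨g, hg0, rfl, fun m hm => hgmono m (by omega), rfl⟩
    calc (∑ m ∈ Finset.range (i + 1), ∑ l ∈ Finset.Icc (g m) (g (m + 1)), τ m l)
          + ∑ l ∈ Finset.Icc (g (i+1)) (g (i+1+1)), τ (i+1) l
        ≤ Mcl τ i j + ∑ l ∈ Finset.Icc j k, τ (i+1) l := by
          rw [hg1]
          exact add_le_add_left (ih j _ hmem) _
      _ ≤ _ := Finset.le_sup' (fun j => Mcl τ i j + ∑ l ∈ Finset.Icc j k, τ (i+1) l)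
          (Finset.mem_Icc.2 ⟨hj1, hjk⟩)

lemma Mcl_nonneg (τ : ℕ → ℕ → ℝ) (n : ℕ) (hτ : ∀ i, i ≤ n → ∀ k, 1 ≤ k → 0 ≤ τ i k) :
    ∀ i, i ≤ n → ∀ k, 0 ≤ Mcl τ i k := by
  intro i
  induction i with
  | zero =>
    intro _ k
    exact Finset.sum_nonneg fun j hj => hτ 0 (by omega) j (Finset.mem_Icc.1 hj).1
  | succ i ih =>
    intro hin k
    have h1 : (1:ℕ) ∈ insert 1 (Finset.Icc 1 k) := Finset.mem_insert_self _ _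
    calc (0:ℝ) ≤ Mcl τ i 1 + ∑ l ∈ Finset.Icc 1 k, τ (i+1) l := by
          apply add_nonneg (ih (by omega) 1)
          exact Finset.sum_nonneg fun l hl => hτ (i+1) hin l (Finset.mem_Icc.1 hl).1
      _ ≤ Mcl τ (i+1) k := by
          rw [Mcl]
          exact Finset.le_sup' (fun j => Mcl τ i j + ∑ l ∈ Finset.Icc j k, τ (i+1) l) h1

lemma Mcl_base (τ : ℕ → ℕ → ℝ) (i : ℕ) : Mcl τ (i+1) 1 = τ (i+1) 1 + Mcl τ i 1 := by
  have h : Mcl τ (i+1) 1 = ({1} : Finset ℕ).sup' ⟨1, by simp⟩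
      (fun j => Mcl τ i j + ∑ l ∈ Finset.Icc j 1, τ (i+1) l) := by
    rw [Mcl_succ τ i 1 le_rfl]
    exact Finset.sup'_congr _ (by decide) (fun _ _ => rfl)
  rw [h, Finset.sup'_singleton]
  simp [add_comm]

lemma Mcl_rec (τ : ℕ → ℕ → ℝ) (i k : ℕ) (hk : 1 ≤ k) :
    Mcl τ (i+1) (k+1) = τ (i+1) (k+1) + max (Mcl τ i (k+1)) (Mcl τ (i+1) k) := by
  have hne : (Finset.Icc 1 k).Nonempty := ⟨1, by simp [hk]⟩
  rw [Mcl_succ τ i (k+1) (by omega)]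
  show (Finset.Icc 1 (k+1)).sup' (Finset.nonempty_Icc.2 (by omega)) _ = _
  have hins : Finset.Icc 1 (k+1) = insert (k+1) (Finset.Icc 1 k) := by
    rw [Finset.insert_Icc_right_eq_Icc_add_one (by omega)]
  rw [Finset.sup'_congr _ hins (fun _ _ => rfl), Finset.sup'_insert (H := hne)]
  have hsum : ∀ j ∈ Finset.Icc 1 k,
      Mcl τ i j + ∑ l ∈ Finset.Icc j (k+1), τ (i+1) l
        = (Mcl τ i j + ∑ l ∈ Finset.Icc j k, τ (i+1) l) + τ (i+1) (k+1) := by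
    intro j hj
    rw [Finset.mem_Icc] at hj
    rw [Finset.sum_Icc_succ_top (by omega)]
    ring
  rw [Finset.sup'_congr hne rfl hsum, ← Finset.sup'_add, ← Mcl_succ τ i k hk,
    Finset.Icc_self, Finset.sum_singleton, sup_comm, max_add_add_right, add_comm,
    sup_comm (Mcl τ (i+1) k) (Mcl τ i (k+1))]


/-- For an open tandem system of `n` queues with infinite buffers starting
empty at time zero (`D i 0 = 0`, `τ i k ≥ 0`), satisfying the recursions
`D 0 k = τ 0 k + D 0 (k-1)` and `D i k = τ i k + max (D (i-1) k) (D i (k-1))`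
for `1 ≤ i ≤ n`, `k ≥ 1`, the departure time from the last server satisfies, for `k ≥ 1`,
`D n k = max_{1 ≤ i₁ ≤ ⋯ ≤ iₙ ≤ k} ( ∑_{j=1}^{i₁} τ 0 j + ∑_{j=i₁}^{i₂} τ 1 j + ⋯ +
∑_{j=iₙ}^{k} τ n j )`. The nondecreasing tuple `(i₁, …, iₙ)` is encoded as
`(g 1, …, g n)` for `g : ℕ → ℕ` with `g 0 = 1`, `g (n+1) = k` and `g m ≤ g (m+1)`
for `m ≤ n`, and the maximum is expressed as the supremum of the (nonempty, finite)
set of corresponding values. -/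
theorem tandem_closed_form (n : ℕ) (τ : ℕ → ℕ → ℝ) (D : ℕ → ℕ → ℝ)
    (hτ : ∀ i, i ≤ n → ∀ k, 1 ≤ k → 0 ≤ τ i k)
    (hD0 : ∀ i, i ≤ n → D i 0 = 0)
    (h0 : ∀ k, 1 ≤ k → D 0 k = τ 0 k + D 0 (k - 1))
    (hi : ∀ i, 1 ≤ i → i ≤ n → ∀ k, 1 ≤ k →
      D i k = τ i k + max (D (i - 1) k) (D i (k - 1))) :
    ∀ k, 1 ≤ k →
      D n k = sSup { x : ℝ | ∃ g : ℕ → ℕ, g 0 = 1 ∧ g (n + 1) = k ∧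
        (∀ m, m ≤ n → g m ≤ g (m + 1)) ∧
        x = ∑ m ∈ Finset.range (n + 1), ∑ j ∈ Finset.Icc (g m) (g (m + 1)), τ m j } := by
  have key : ∀ i, i ≤ n → ∀ k, 1 ≤ k → D i k = Mcl τ i k := by
    intro i
    induction i with
    | zero =>
      intro _ k hk
      induction k with
      | zero => omega
      | succ k ihk =>
        rcases Nat.eq_zero_or_pos k with h | h
        · subst h
          rw [h0 1 le_rfl]
          simp [hD0 0 (Nat.zero_le n), Mcl]
        · rw [h0 (k+1) (by omega)]
          simp only [Nat.add_sub_cancel]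
          rw [ihk h]
          show τ 0 (k+1) + Mcl τ 0 k = Mcl τ 0 (k+1)
          rw [Mcl, Mcl, Finset.sum_Icc_succ_top (by omega : 1 ≤ k + 1)]
          ring
    | succ i ih =>
      intro hin k hk
      have hin' : i ≤ n := by omega
      induction k, hk using Nat.le_induction with
      | base =>
        have h := hi (i+1) (by omega) hin 1 le_rfl
        simp only [Nat.add_sub_cancel, Nat.sub_self] at h
        rw [h, hD0 (i+1) hin, ih hin' 1 le_rfl, Mcl_base]
        rw [max_eq_left (Mcl_nonneg τ n hτ i hin' 1)]
      | succ k hk ihk =>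
        have h := hi (i+1) (by omega) hin (k+1) (by omega)
        simp only [Nat.add_sub_cancel] at h
        rw [h, ih hin' (k+1) (by omega), ihk, Mcl_rec τ i k hk]
  intro k hk
  rw [key n le_rfl k hk]
  symm
  exact IsGreatest.csSup_eq ⟨Mcl_mem τ n k hk, fun x hx => Mcl_ub τ n k x hx⟩
end

section
/- For all k ≥ 1, D_1(k) = max_{1 ≤ i ≤ k} ( Σ_{j=1}^{i} τ_{0,j} + τ_{1,i} + Σ_{j=i+1}^{k} max(τ_{1,j}, τ_{2,j-1}) ). -/
/-- For a tandem system of two single-server queues with manufacturing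
blocking, the second buffer of capacity 0, starting empty at time zero, satisfying
`D₀ k = τ₀ k + D₀ (k-1)`, `D₁ k = max (τ₁ k + max (D₀ k) (D₁ (k-1))) (D₂ (k-1))`,
`D₂ k = τ₂ k + max (D₁ k) (D₂ (k-1))` for `k ≥ 1`, one has, for all `k ≥ 1`,
`D₁ k = max_{1 ≤ i ≤ k} ( ∑_{j=1}^{i} τ₀ j + τ₁ i + ∑_{j=i+1}^{k} max (τ₁ j) (τ₂ (j-1)) )`. -/
theorem blocking_tandem_D1_closed_form (τ₀ τ₁ τ₂ D₀ D₁ D₂ : ℕ → ℝ)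
    (hτ₀ : ∀ k, 1 ≤ k → 0 ≤ τ₀ k) (hτ₁ : ∀ k, 1 ≤ k → 0 ≤ τ₁ k)
    (hτ₂ : ∀ k, 1 ≤ k → 0 ≤ τ₂ k)
    (h00 : D₀ 0 = 0) (h10 : D₁ 0 = 0) (h20 : D₂ 0 = 0)
    (h0 : ∀ k, 1 ≤ k → D₀ k = τ₀ k + D₀ (k - 1))
    (h1 : ∀ k, 1 ≤ k → D₁ k = max (τ₁ k + max (D₀ k) (D₁ (k - 1))) (D₂ (k - 1)))
    (h2 : ∀ k, 1 ≤ k → D₂ k = τ₂ k + max (D₁ k) (D₂ (k - 1))) :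
    ∀ k, ∀ hk : 1 ≤ k,
      D₁ k = (Finset.Icc 1 k).sup' (Finset.nonempty_Icc.mpr hk)
        (fun i => (∑ j ∈ Finset.Icc 1 i, τ₀ j) + τ₁ i +
          ∑ j ∈ Finset.Icc (i + 1) k, max (τ₁ j) (τ₂ (j - 1))) := by
  -- D₁ dominates previous D₂
  have hge : ∀ k, 1 ≤ k → D₂ (k - 1) ≤ D₁ k := by
    intro k hk
    rw [h1 k hk]; exact le_max_right _ _
  -- D₂ k = τ₂ k + D₁ k for k ≥ 1
  have hD2 : ∀ k, 1 ≤ k → D₂ k = τ₂ k + D₁ k := by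
    intro k hk
    rw [h2 k hk, max_eq_left (hge k hk)]
  -- D₀ is a partial sum
  have hD0 : ∀ k, D₀ k = ∑ j ∈ Finset.Icc 1 k, τ₀ j := by
    intro k
    induction k with
    | zero => simpa using h00
    | succ n ih =>
      rw [h0 (n + 1) (Nat.le_add_left 1 n), Finset.sum_Icc_succ_top (Nat.le_add_left 1 n)]
      simp [ih, add_comm]
  -- main induction
  intro k hk
  induction k, hk using Nat.le_induction with
  | base =>
    have hD11 : D₁ 1 = τ₀ 1 + τ₁ 1 := by
      rw [h1 1 le_rfl]
      simp only [Nat.sub_self, h10, h20, h0 1 le_rfl, h00, add_zero]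
      rw [max_eq_left (hτ₀ 1 le_rfl), max_eq_left]
      · ring
      · exact add_nonneg (hτ₁ 1 le_rfl) (hτ₀ 1 le_rfl)
    rw [hD11]
    simp [Finset.Icc_self]
  | succ n hn ih =>
    have hne : (Finset.Icc 1 n).Nonempty := Finset.nonempty_Icc.mpr hn
    have hins : insert (n + 1) (Finset.Icc 1 n) = Finset.Icc 1 (n + 1) :=
      Finset.insert_Icc_right_eq_Icc_add_one (Nat.le_add_left 1 n)
    rw [Finset.sup'_congr (Finset.nonempty_Icc.mpr (Nat.le_add_left 1 n)) hins.symm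
      (fun x _ => rfl), Finset.sup'_insert hne]
    -- compute the top term
    have htop : (∑ j ∈ Finset.Icc 1 (n + 1), τ₀ j) + τ₁ (n + 1) +
        ∑ j ∈ Finset.Icc (n + 1 + 1) (n + 1), max (τ₁ j) (τ₂ (j - 1))
        = τ₁ (n + 1) + D₀ (n + 1) := by
      rw [Finset.Icc_eq_empty (a := n + 1 + 1) (b := n + 1) (by omega), Finset.sum_empty, hD0]
      ring
    -- rewrite the sup over Icc 1 n
    have hsup : ((Finset.Icc 1 n).sup' hne
        (fun i => (∑ j ∈ Finset.Icc 1 i, τ₀ j) + τ₁ i +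
          ∑ j ∈ Finset.Icc (i + 1) (n + 1), max (τ₁ j) (τ₂ (j - 1))))
        = D₁ n + max (τ₁ (n + 1)) (τ₂ n) := by
      rw [ih, Finset.sup'_add]
      apply Finset.sup'_congr _ rfl
      intro i hi
      rw [Finset.mem_Icc] at hi
      rw [Finset.sum_Icc_succ_top (by omega)]
      simp only [Nat.add_sub_cancel]
      ring
    rw [hsup, htop]
    -- now the recursion
    have h1' := h1 (n + 1) (Nat.le_add_left 1 n)
    have h2' := hD2 n hn
    simp only [Nat.add_sub_cancel] at h1'
    rw [h1', h2']
    simp only [max_def]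
    split_ifs <;> linarith
end

section
/- For every k ≥ 1: D_0(k) = τ_{0,k} + D_0(k-1); for every i with 1 ≤ i ≤ n-1, D_i(k) = max( max_{0 ≤ j ≤ i} ( Σ_{m=j}^{i} τ_{m,k} + D_j(k-1) ), D_{i+1}(k-1) ); and D_n(k) = max_{0 ≤ j ≤ n} ( Σ_{m=j}^{n} τ_{m,k} + D_j(k-1) ). That is, the vector (D_0(k), ..., D_n(k)) equals the max-plus product of the transition matrix whose (i,j) entry is Σ_{m=j}^{i} τ_{m,k} for j ≤ i, is 0 at (i, i+1) for 1 ≤ i ≤ n-1, and is -∞ otherwise, with the vector (D_0(k-1), ..., D_n(k-1)). -/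
/-- For a tandem system of `n` single-server queues with manufacturing
blocking and all internal buffers of capacity 0, satisfying for `k ≥ 1` the recursions
`D 0 k = τ 0 k + D 0 (k-1)`,
`D i k = max (τ i k + max (D (i-1) k) (D i (k-1))) (D (i+1) (k-1))` for `1 ≤ i ≤ n-1`,
and `D n k = τ n k + max (D (n-1) k) (D n (k-1))`, one has for every `k ≥ 1`:
`D 0 k = τ 0 k + D 0 (k-1)`;
`D i k = max ( max_{0 ≤ j ≤ i} ((∑_{m=j}^{i} τ m k) + D j (k-1)) ) (D (i+1) (k-1))`
for `1 ≤ i ≤ n-1`; and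
`D n k = max_{0 ≤ j ≤ n} ((∑_{m=j}^{n} τ m k) + D j (k-1))`.
This says `(D 0 k, …, D n k)` is the max-plus product of the transition matrix with
`(i,j)` entry `∑_{m=j}^{i} τ m k` for `j ≤ i`, entry `0` at `(i, i+1)` for
`1 ≤ i ≤ n-1`, and `-∞` otherwise, with `(D 0 (k-1), …, D n (k-1))`. -/
theorem blocking_tandem_matrix_form (n : ℕ) (hn : 1 ≤ n) (τ D : ℕ → ℕ → ℝ)
    (h0 : ∀ k, 1 ≤ k → D 0 k = τ 0 k + D 0 (k - 1))
    (hi : ∀ i, 1 ≤ i → i ≤ n - 1 → ∀ k, 1 ≤ k →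
      D i k = max (τ i k + max (D (i - 1) k) (D i (k - 1))) (D (i + 1) (k - 1)))
    (hnrec : ∀ k, 1 ≤ k → D n k = τ n k + max (D (n - 1) k) (D n (k - 1))) :
    ∀ k, 1 ≤ k →
      (D 0 k = τ 0 k + D 0 (k - 1)) ∧
      (∀ i, 1 ≤ i → i ≤ n - 1 →
        D i k = max
          ((Finset.Icc 0 i).sup' (Finset.nonempty_Icc.mpr (Nat.zero_le i))
            (fun j => (∑ m ∈ Finset.Icc j i, τ m k) + D j (k - 1)))
          (D (i + 1) (k - 1))) ∧
      (D n k = (Finset.Icc 0 n).sup' (Finset.nonempty_Icc.mpr (Nat.zero_le n))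
        (fun j => (∑ m ∈ Finset.Icc j n, τ m k) + D j (k - 1))) := by
  intro k hk
  set S : ℕ → ℝ := fun i => (Finset.Icc 0 i).sup' (Finset.nonempty_Icc.mpr (Nat.zero_le i))
      (fun j => (∑ m ∈ Finset.Icc j i, τ m k) + D j (k - 1)) with hSdef
  have hS0 : S 0 = τ 0 k + D 0 (k - 1) := by
    simp [hSdef]
  have hSsucc : ∀ i : ℕ, S (i + 1) = τ (i + 1) k + max (S i) (D (i + 1) (k - 1)) := by
    intro i
    have hins : Finset.Icc 0 (i + 1) = insert (i + 1) (Finset.Icc 0 i) := by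
      ext x; simp [Nat.lt_succ_iff]; omega
    rw [hSdef]
    simp only [hins]
    rw [Finset.sup'_insert]
    have h1 : (∑ m ∈ Finset.Icc (i + 1) (i + 1), τ m k) + D (i + 1) (k - 1)
        = τ (i + 1) k + D (i + 1) (k - 1) := by simp
    have h2 : ((Finset.Icc 0 i).sup' (Finset.nonempty_Icc.mpr (Nat.zero_le i))
        (fun j => (∑ m ∈ Finset.Icc j (i + 1), τ m k) + D j (k - 1)))
        = τ (i + 1) k + S i := by
      simp only [hSdef]
      rw [Finset.add_sup']
      apply Finset.sup'_congr _ rfl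
      intro j hj
      simp only [Finset.mem_Icc] at hj
      rw [Finset.sum_Icc_succ_top (by omega)]
      ring
    rw [h1, h2]
    rw [max_comm, max_add_add_left]
    exact Finset.nonempty_Icc.mpr (Nat.zero_le i)
  have main : ∀ i, 1 ≤ i → i ≤ n - 1 → D i k = max (S i) (D (i + 1) (k - 1)) := by
    intro i
    induction i with
    | zero => omega
    | succ i ih =>
      intro _ hle
      rw [hi (i + 1) (by omega) hle k hk]
      have hDi : max (D (i + 1 - 1) k) (D (i + 1) (k - 1))
          = max (S i) (D (i + 1) (k - 1)) := by
        rcases Nat.eq_zero_or_pos i with h0i | h1i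
        · subst h0i
          simp only [Nat.add_sub_cancel]
          rw [h0 k hk, hS0]
        · have hD := ih h1i (by omega)
          simp only [Nat.add_sub_cancel]
          rw [hD, max_assoc, max_self]
      rw [hDi, hSsucc i]
  refine ⟨h0 k hk, fun i h1 h2 => main i h1 h2, ?_⟩
  rw [hnrec k hk]
  rcases Nat.lt_or_ge n 2 with h2 | h2
  · interval_cases n
    show τ 1 k + max (D 0 k) (D 1 (k - 1)) = S 1
    rw [h0 k hk, ← hS0, hSsucc 0]
  · have hD := main (n - 1) (by omega) (by omega)
    rw [hD]
    have hn1 : n - 1 + 1 = n := by omega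
    rw [hn1] at hD ⊢
    rw [max_assoc, max_self]
    have h := hSsucc (n - 1)
    rw [hn1] at h
    exact h.symm
end

section
/- For every k ≥ c and every i with 1 ≤ i ≤ n, D_i(k) = max( max_{1 ≤ j ≤ i} ( Σ_{m=j}^{i} τ_{m,k} + D_j(k-1) ), Σ_{m=1}^{i} τ_{m,k} + D_n(k-c) ); that is, the vector (D_1(k), ..., D_n(k)) equals the max-plus sum of R_k applied to (D_1(k-1), ..., D_n(k-1)) and S_k applied to (D_1(k-c), ..., D_n(k-c)), where R_k is the lower triangular matrix with (i,j) entry Σ_{m=j}^{i} τ_{m,k} for j ≤ i, and S_k has last column with i-th entry Σ_{m=1}^{i} τ_{m,k} and all other entries -∞. -/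
/-- For a closed tandem system of `n` single-server queues with infinite
buffers in which `c ≥ 1` customers circulate, satisfying for `k ≥ c` the recursions
`D 1 k = τ 1 k + max (D n (k-c)) (D 1 (k-1))` and
`D i k = τ i k + max (D (i-1) k) (D i (k-1))` for `2 ≤ i ≤ n`, one has, for every
`k ≥ c` and every `1 ≤ i ≤ n`,
`D i k = max ( max_{1 ≤ j ≤ i} ((∑_{m=j}^{i} τ m k) + D j (k-1)) )
             ( (∑_{m=1}^{i} τ m k) + D n (k-c) )`;
i.e. `(D 1 k, …, D n k)` is the max-plus sum of `R k` applied to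
`(D 1 (k-1), …, D n (k-1))` and `S k` applied to `(D 1 (k-c), …, D n (k-c))`, where
`R k` is lower triangular with `(i,j)` entry `∑_{m=j}^{i} τ m k` for `j ≤ i`, and
`S k` has last column with `i`-th entry `∑_{m=1}^{i} τ m k` and `-∞` elsewhere. -/
theorem closed_tandem_matrix_form (n c : ℕ) (hc : 1 ≤ c) (τ D : ℕ → ℕ → ℝ)
    (h1 : ∀ k, c ≤ k → D 1 k = τ 1 k + max (D n (k - c)) (D 1 (k - 1)))
    (hi : ∀ i, 2 ≤ i → i ≤ n → ∀ k, c ≤ k →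
      D i k = τ i k + max (D (i - 1) k) (D i (k - 1))) :
    ∀ k, c ≤ k → ∀ i, ∀ hi1 : 1 ≤ i, i ≤ n →
      D i k = max
        ((Finset.Icc 1 i).sup' (Finset.nonempty_Icc.mpr hi1)
          (fun j => (∑ m ∈ Finset.Icc j i, τ m k) + D j (k - 1)))
        ((∑ m ∈ Finset.Icc 1 i, τ m k) + D n (k - c)) := by
  intro k hk i
  induction i with
  | zero => intro h; omega
  | succ i ih =>
    intro hi1 hin
    rcases Nat.eq_zero_or_pos i with rfl | hipos
    · -- i + 1 = 1
      simp only [Finset.Icc_self, Finset.sup'_singleton]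
      rw [h1 k hk]
      simp [← max_add_add_left, max_comm]
    · have h2 : 2 ≤ i + 1 := by omega
      have hin' : i ≤ n := by omega
      have key := ih hipos hin'
      rw [hi (i+1) h2 hin k hk]
      simp only [Nat.add_sub_cancel]
      rw [key, ← max_add_add_left, ← max_add_add_left]
      -- rewrite τ (i+1) k + sup' ...
      rw [Finset.add_sup']
      have hsum : ∀ j ∈ Finset.Icc 1 i,
          τ (i+1) k + ((∑ m ∈ Finset.Icc j i, τ m k) + D j (k-1))
          = (∑ m ∈ Finset.Icc j (i+1), τ m k) + D j (k-1) := by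
        intro j hj
        rw [Finset.mem_Icc] at hj
        rw [Finset.sum_Icc_succ_top (by omega)]
        ring
      rw [Finset.sup'_congr _ rfl hsum]
      have hsum1 : τ (i+1) k + ((∑ m ∈ Finset.Icc 1 i, τ m k) + D n (k-c))
          = (∑ m ∈ Finset.Icc 1 (i+1), τ m k) + D n (k-c) := by
        rw [Finset.sum_Icc_succ_top (by omega)]; ring
      rw [hsum1]
      -- split the target sup' over Icc 1 (i+1)
      have hins : Finset.Icc 1 (i+1) = insert (i+1) (Finset.Icc 1 i) := by
        ext x
        simp only [Finset.mem_Icc, Finset.mem_insert]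
        omega
      conv_rhs => rw [Finset.sup'_congr _ hins (fun j _ => rfl)]
      rw [Finset.sup'_insert]
      simp only [Finset.Icc_self, Finset.sum_singleton]
      rw [max_comm _ (τ (i+1) k + D (i+1) (k-1)), ← max_assoc]
end

section
/- For all k ≥ 2, D_1(k) = τ_{1,1} + Σ_{i=1}^{k-2} max(τ_{1,i+1}, τ_{2,i}) + τ_{1,k}. -/
/-- For a closed tandem system of two single-server queues with infinite
buffers and `c = 2` circulating customers, both initially in the buffer of server 1,
with `D₁ 1 = τ₁ 1`, `D₁ 2 = τ₁ 2 + D₁ 1`, `D₁ k = τ₁ k + max (D₁ (k-1)) (D₂ (k-2))`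
for `k ≥ 3`, `D₂ 1 = τ₂ 1 + D₁ 1`, and `D₂ k = τ₂ k + max (D₁ k) (D₂ (k-1))` for
`k ≥ 2`, one has, for all `k ≥ 2`,
`D₁ k = τ₁ 1 + ∑_{i=1}^{k-2} max (τ₁ (i+1)) (τ₂ i)`. -/
theorem closed_tandem_two_D1_closed_form (τ₁ τ₂ D₁ D₂ : ℕ → ℝ)
    (h11 : D₁ 1 = τ₁ 1)
    (h12 : D₁ 2 = τ₁ 2 + D₁ 1)
    (h1k : ∀ k, 3 ≤ k → D₁ k = τ₁ k + max (D₁ (k - 1)) (D₂ (k - 2)))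
    (h21 : D₂ 1 = τ₂ 1 + D₁ 1)
    (h2k : ∀ k, 2 ≤ k → D₂ k = τ₂ k + max (D₁ k) (D₂ (k - 1))) :
    ∀ k, 2 ≤ k →
      D₁ k = τ₁ 1 + (∑ i ∈ Finset.Icc 1 (k - 2), max (τ₁ (i + 1)) (τ₂ i)) + τ₁ k := by
  have key : ∀ k, 2 ≤ k →
      (D₁ k = τ₁ 1 + (∑ i ∈ Finset.Icc 1 (k - 2), max (τ₁ (i + 1)) (τ₂ i)) + τ₁ k) ∧
      (D₂ (k - 1) = τ₁ 1 + (∑ i ∈ Finset.Icc 1 (k - 2), max (τ₁ (i + 1)) (τ₂ i)) + τ₂ (k - 1)) := by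
    intro k hk
    induction k, hk using Nat.le_induction with
    | base =>
      rw [show (2:ℕ) - 2 = 0 from rfl, Finset.Icc_eq_empty (by norm_num), Finset.sum_empty]
      refine ⟨by rw [h12, h11]; ring, by rw [show (2:ℕ) - 1 = 1 from rfl, h21, h11]; ring⟩
    | succ k hk ih =>
      obtain ⟨ih1, ih2⟩ := ih
      have hs : (∑ i ∈ Finset.Icc 1 (k - 1), max (τ₁ (i + 1)) (τ₂ i))
          = (∑ i ∈ Finset.Icc 1 (k - 2), max (τ₁ (i + 1)) (τ₂ i))
            + max (τ₁ k) (τ₂ (k - 1)) := by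
        rw [show k - 1 = (k - 2) + 1 by omega, Finset.sum_Icc_succ_top (by omega),
          show k - 2 + 1 + 1 = k by omega, show k - 2 + 1 = k - 1 by omega]
      have hmax : max (D₁ k) (D₂ (k - 1))
          = τ₁ 1 + (∑ i ∈ Finset.Icc 1 (k - 2), max (τ₁ (i + 1)) (τ₂ i))
            + max (τ₁ k) (τ₂ (k - 1)) := by
        rw [ih1, ih2, max_add_add_left]
      constructor
      · rw [h1k (k + 1) (by omega), show k + 1 - 1 = k from rfl,
          show k + 1 - 2 = k - 1 from rfl, hmax, hs]
        ring
      · rw [show k + 1 - 1 = k from rfl, show k + 1 - 2 = k - 1 from rfl, h2k k hk, hmax, hs]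
        ring
  exact fun k hk => (key k hk).1
end

section
/- For all k ≥ 1, D_2(k) = τ_{1,1} + Σ_{i=1}^{k-1} max(τ_{1,i+1}, τ_{2,i}) + τ_{2,k}. -/
/-- For a closed tandem system of two single-server queues with infinite
buffers and `c = 2` circulating customers, both initially in the buffer of server 1,
with `D₁ 1 = τ₁ 1`, `D₁ 2 = τ₁ 2 + D₁ 1`, `D₁ k = τ₁ k + max (D₁ (k-1)) (D₂ (k-2))`
for `k ≥ 3`, `D₂ 1 = τ₂ 1 + D₁ 1`, and `D₂ k = τ₂ k + max (D₁ k) (D₂ (k-1))` for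
`k ≥ 2`, one has, for all `k ≥ 1`,
`D₂ k = τ₁ 1 + ∑_{i=1}^{k-1} max (τ₁ (i+1)) (τ₂ i) + τ₂ k`. -/
theorem closed_tandem_two_D2_closed_form (τ₁ τ₂ D₁ D₂ : ℕ → ℝ)
    (h11 : D₁ 1 = τ₁ 1)
    (h12 : D₁ 2 = τ₁ 2 + D₁ 1)
    (h1k : ∀ k, 3 ≤ k → D₁ k = τ₁ k + max (D₁ (k - 1)) (D₂ (k - 2)))
    (h21 : D₂ 1 = τ₂ 1 + D₁ 1)
    (h2k : ∀ k, 2 ≤ k → D₂ k = τ₂ k + max (D₁ k) (D₂ (k - 1))) :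
    ∀ k, 1 ≤ k →
      D₂ k = τ₁ 1 + (∑ i ∈ Finset.Icc 1 (k - 1), max (τ₁ (i + 1)) (τ₂ i)) + τ₂ k := by
  set A : ℕ → ℝ := fun n => ∑ i ∈ Finset.Icc 1 n, max (τ₁ (i + 1)) (τ₂ i) with hA
  have key : ∀ n : ℕ, D₁ (n + 2) = τ₁ 1 + A n + τ₁ (n + 2) ∧
      D₂ (n + 1) = τ₁ 1 + A n + τ₂ (n + 1) := by
    intro n
    induction n with
    | zero =>
      constructor
      · simp only [hA]
        rw [h12, h11]
        norm_num
        ring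
      · simp only [hA]
        rw [h21, h11]
        norm_num
        ring
    | succ n ih =>
      obtain ⟨ih1, ih2⟩ := ih
      have hAstep : A (n + 1) = A n + max (τ₁ (n + 2)) (τ₂ (n + 1)) := by
        simp [hA, Finset.sum_Icc_succ_top (Nat.le_add_left 1 n)]
      have hD1 : D₁ (n + 3) = τ₁ 1 + A (n + 1) + τ₁ (n + 3) := by
        have h := h1k (n + 3) (by omega)
        have e1 : n + 3 - 1 = n + 2 := by omega
        have e2 : n + 3 - 2 = n + 1 := by omega
        rw [e1, e2, ih1, ih2, max_add_add_left] at h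
        rw [h, hAstep]
        ring
      have hD2 : D₂ (n + 2) = τ₁ 1 + A (n + 1) + τ₂ (n + 2) := by
        have h := h2k (n + 2) (by omega)
        have e1 : n + 2 - 1 = n + 1 := by omega
        rw [e1, ih1, ih2, max_add_add_left] at h
        rw [h, hAstep]
        ring
      exact ⟨hD1, hD2⟩
  intro k hk
  obtain ⟨m, rfl⟩ : ∃ m, k = m + 1 := ⟨k - 1, by omega⟩
  cases m with
  | zero =>
    show D₂ 1 = τ₁ 1 + A (1 - 1) + τ₂ 1
    have hA0 : A (1 - 1) = 0 := by simp [hA]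
    rw [hA0, h21, h11]
    ring
  | succ n =>
    have e : n + 1 + 1 - 1 = n + 1 := by omega
    rw [e]
    exact (key (n + 1)).2
end
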